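/- Let a group Γ act on a set X and let W be the σ-ideal generated by wandering sets. Suppose A ⊆ X, k ∈ ℕ, g₁,…,g_k ∈ Γ, and N ∈ ℕ are such that for all n₁,…,n_k ≥ N the intersection ⋂_{i=1}^k g_i^{n_i} A is empty. Then A ∈ W. -/
import Mathlib


open Pointwise

variable {Γ X : Type*} [Group Γ] [MulAction Γ X]

/-- `A` is wandering with respect to `g`. -/
def Wandering (g : Γ) (A : Set X) : Prop :=
  ∀ n m : ℤ, n ≠ m → Disjoint (g ^ n • A) (g ^ m • A)

/-- `A` is a countable union of wandering sets. -/
def InW (A : Set X) : Prop :=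
  ∃ f : ℕ → Set X, (∀ n, ∃ g : Γ, Wandering g (f n)) ∧ A = ⋃ n, f n

lemma disjoint_smul_set {s : Γ} {P Q : Set X} (h : Disjoint P Q) :
    Disjoint (s • P) (s • Q) := by
  rw [Set.disjoint_iff_inter_eq_empty] at h ⊢
  rw [← Set.smul_set_inter, h, Set.smul_set_empty]

lemma wandering_mono {g : Γ} {A B : Set X} (h : Wandering g A) (hBA : B ⊆ A) :
    Wandering g B := fun n m hnm =>
  (h n m hnm).mono (Set.smul_set_mono hBA) (Set.smul_set_mono hBA)

lemma inW_empty : InW (Γ := Γ) (∅ : Set X) :=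
  ⟨fun _ => ∅, fun _ => ⟨1, fun n m _ => by simp⟩, by simp⟩

lemma inW_subset {A B : Set X} (h : InW (Γ := Γ) A) (hBA : B ⊆ A) : InW (Γ := Γ) B := by
  obtain ⟨f, hf, rfl⟩ := h
  refine ⟨fun n => B ∩ f n, fun n => ?_, ?_⟩
  · obtain ⟨g, hg⟩ := hf n; exact ⟨g, wandering_mono hg Set.inter_subset_right⟩
  · ext x
    simp only [Set.mem_iUnion, Set.mem_inter_iff]
    constructor
    · intro hx
      obtain ⟨n, hn⟩ := Set.mem_iUnion.1 (hBA hx)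
      exact ⟨n, hx, hn⟩
    · rintro ⟨n, hx, -⟩; exact hx

lemma inW_iUnion {f : ℕ → Set X} (h : ∀ n, InW (Γ := Γ) (f n)) :
    InW (Γ := Γ) (⋃ n, f n) := by
  choose F hF hFU using h
  let e : ℕ × ℕ ≃ ℕ := Denumerable.eqv (ℕ × ℕ)
  refine ⟨fun n => F (e.symm n).1 (e.symm n).2, fun n => hF _ _, ?_⟩
  ext x
  simp only [Set.mem_iUnion]
  constructor
  · rintro ⟨n, hx⟩
    rw [hFU n] at hx
    obtain ⟨m, hm⟩ := Set.mem_iUnion.1 hx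
    exact ⟨e (n, m), by simpa [e] using hm⟩
  · rintro ⟨p, hp⟩
    refine ⟨(e.symm p).1, ?_⟩
    rw [hFU]
    exact Set.mem_iUnion.2 ⟨(e.symm p).2, hp⟩

lemma inW_union {A B : Set X} (hA : InW (Γ := Γ) A) (hB : InW (Γ := Γ) B) :
    InW (Γ := Γ) (A ∪ B) := by
  have : A ∪ B = ⋃ n : ℕ, (if n = 0 then A else B) := by
    ext x; simp only [Set.mem_union, Set.mem_iUnion]
    constructor
    · rintro (hx | hx)
      · exact ⟨0, by simpa⟩
      · exact ⟨1, by simpa⟩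
    · rintro ⟨n, hx⟩
      by_cases hn : n = 0 <;> simp [hn] at hx <;> [left; right] <;> exact hx
  rw [this]
  exact inW_iUnion fun n => by by_cases hn : n = 0 <;> simp [hn, hA, hB]

lemma wandering_smul {g : Γ} {A : Set X} (h : Wandering g A) (s : Γ) :
    Wandering (s * g * s⁻¹) (s • A) := by
  have key : ∀ j : ℤ, (s * g * s⁻¹) ^ j • (s • A) = s • (g ^ j • A) := by
    intro j
    have hc : (s * g * s⁻¹) ^ j = s * g ^ j * s⁻¹ := by
      have := map_zpow (MulAut.conj s) g j
      simp only [MulAut.conj_apply] at this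
      exact this.symm ▸ rfl
    rw [hc, smul_smul, smul_smul]
    congr 1
    group
  intro n m hnm
  rw [key, key]
  exact disjoint_smul_set (h n m hnm)

lemma inW_smul {A : Set X} (h : InW (Γ := Γ) A) (s : Γ) : InW (Γ := Γ) (s • A) := by
  obtain ⟨f, hf, rfl⟩ := h
  refine ⟨fun n => s • f n, fun n => ?_, ?_⟩
  · obtain ⟨g, hg⟩ := hf n
    exact ⟨s * g * s⁻¹, wandering_smul hg s⟩
  · exact (Set.smul_set_iUnion ..)

/-- Fact F : if `gⁿA ∩ A ∈ W` for all `n ≥ N`, then `A ∈ W`. -/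
lemma factF (g : Γ) (N : ℕ) (A : Set X)
    (h : ∀ n : ℕ, N ≤ n → InW (Γ := Γ) (g ^ n • A ∩ A)) : InW (Γ := Γ) A := by
  rcases Nat.eq_zero_or_pos N with hN | hN
  · have := h 0 (by omega)
    simpa using this
  -- N ≥ 1
  set U : Set X := ⋃ (n : ℕ) (_ : N ≤ n), (g ^ (n : ℤ) • A ∪ g ^ (-(n : ℤ)) • A) with hU
  set C : Set X := A \ U with hC
  -- C is wandering w.r.t. g ^ N
  have hCdisj : ∀ j : ℤ, (N : ℤ) ≤ |j| → Disjoint (g ^ j • C) C := by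
    intro j hj
    rw [Set.disjoint_left]
    rintro x hx hxC
    have hxA : x ∈ g ^ j • A := Set.smul_set_mono (Set.diff_subset) hx
    have hxU : x ∉ U := hxC.2
    apply hxU
    rcases le_or_gt 0 j with hj0 | hj0
    · rw [abs_of_nonneg hj0] at hj
      have hj' : j = ((j.toNat : ℕ) : ℤ) := by omega
      refine Set.mem_iUnion.2 ⟨j.toNat, Set.mem_iUnion.2 ⟨by omega, Or.inl ?_⟩⟩
      rwa [← hj']
    · rw [abs_of_neg hj0] at hj
      have hj' : j = -(((-j).toNat : ℕ) : ℤ) := by omega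
      refine Set.mem_iUnion.2 ⟨(-j).toNat, Set.mem_iUnion.2 ⟨by omega, Or.inr ?_⟩⟩
      rwa [← hj']
  have hCw : Wandering (g ^ N) C := by
    intro p q hpq
    have h1 : ∀ r : ℤ, (g ^ N) ^ r = g ^ ((N : ℤ) * r) := by
      intro r
      rw [← zpow_natCast g N, ← zpow_mul]
    rw [h1, h1]
    have key : Disjoint (g ^ ((N : ℤ) * p - (N : ℤ) * q) • C) C := by
      apply hCdisj
      have : (N : ℤ) * p - (N : ℤ) * q = (N : ℤ) * (p - q) := by ring
      rw [this, abs_mul]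
      have h2 : (1 : ℤ) ≤ |p - q| := Int.one_le_abs (sub_ne_zero.2 hpq)
      calc (N : ℤ) = (N : ℤ) * 1 := by ring
        _ ≤ |(N : ℤ)| * |p - q| := by
            rw [abs_of_nonneg (by positivity)]
            exact mul_le_mul_of_nonneg_left h2 (by positivity)
    have := disjoint_smul_set (s := g ^ ((N : ℤ) * q)) key
    rw [smul_smul, ← zpow_add] at this
    rwa [show (N : ℤ) * q + ((N : ℤ) * p - (N : ℤ) * q) = (N : ℤ) * p by ring] at this
  -- A ⊆ C ∪ (A ∩ U)
  have hsplit : A ⊆ C ∪ (A ∩ U) := by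
    intro x hx
    by_cases hxU : x ∈ U
    · exact Or.inr ⟨hx, hxU⟩
    · exact Or.inl ⟨hx, hxU⟩
  have hAU : InW (Γ := Γ) (A ∩ U) := by
    have : A ∩ U = ⋃ n : ℕ, (if N ≤ n then
        ((A ∩ g ^ (n : ℤ) • A) ∪ (A ∩ g ^ (-(n : ℤ)) • A)) else ∅) := by
      ext x
      simp only [hU, Set.mem_inter_iff, Set.mem_iUnion, Set.mem_union, Set.mem_ite_empty_right]
      constructor
      · rintro ⟨hxA, n, hn, hx⟩
        exact ⟨n, hn, by tauto⟩
      · rintro ⟨n, hn, hx⟩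
        rcases hx with ⟨hxA, hx⟩ | ⟨hxA, hx⟩
        · exact ⟨hxA, n, hn, Or.inl hx⟩
        · exact ⟨hxA, n, hn, Or.inr hx⟩
    rw [this]
    apply inW_iUnion
    intro n
    by_cases hn : N ≤ n
    · simp only [hn, if_true]
      apply inW_union
      · have h1 : A ∩ g ^ (n : ℤ) • A = g ^ n • A ∩ A := by
          rw [zpow_natCast, Set.inter_comm]
        rw [h1]; exact h n hn
      · have h2 : A ∩ g ^ (-(n : ℤ)) • A = (g ^ n)⁻¹ • (g ^ n • A ∩ A) := by
          rw [Set.smul_set_inter, smul_smul, inv_mul_cancel, one_smul]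
          congr 1
          rw [← zpow_natCast g n, ← zpow_neg]
        rw [h2]
        exact inW_smul (h n hn) _
    · simp [hn, inW_empty]
  have hCin : InW (Γ := Γ) C := ⟨fun n => if n = 0 then C else ∅,
    fun n => by
      by_cases hn : n = 0
      · exact ⟨g ^ N, by simpa [hn] using hCw⟩
      · exact ⟨1, by simp [hn, Wandering]⟩,
    by ext x; simp⟩
  exact inW_subset (inW_union hCin hAU) hsplit

/-- Strengthened induction: intersections including `A` itself. -/
lemma key_induction :
    ∀ (k : ℕ) (g : Fin k → Γ) (N : ℕ) (A : Set X),
    (∀ n : Fin k → ℕ, (∀ i, N ≤ n i) → (A ∩ ⋂ i : Fin k, (g i) ^ (n i) • A) = ∅) →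
    InW (Γ := Γ) A := by
  intro k
  induction k with
  | zero =>
    intro g N A h
    have := h (fun _ => N) (fun i => le_refl N)
    simp only [Set.iInter_of_empty, Set.inter_univ] at this
    rw [this]; exact inW_empty
  | succ k ih =>
    intro g N A h
    apply factF (g (Fin.last k)) N A
    intro n hn
    apply ih (fun i => g i.castSucc) N
    intro m hm
    apply Set.eq_empty_of_subset_empty
    have hempty := h (Fin.snoc m n) (by
      intro j
      refine Fin.lastCases ?_ ?_ j
      · simpa using hn
      · intro i; simpa using hm i)
    rw [← hempty]
    rintro x ⟨⟨hx1, hx2⟩, hx3⟩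
    refine ⟨hx2, Set.mem_iInter.2 ?_⟩
    intro j
    refine Fin.lastCases ?_ ?_ j
    · rw [Fin.snoc_last]; exact hx1
    · intro i
      have := Set.mem_iInter.1 hx3 i
      rw [Fin.snoc_castSucc]
      exact Set.smul_set_mono (Set.inter_subset_right) this

/-- If for some `g₁, …, g_k` and `N` every intersection
`⋂ i, g_i ^ (n_i) • A` with all `n_i ≥ N` is empty, then `A` lies in the
σ-ideal generated by wandering sets. -/
theorem inW_of_empty_intersections (Γ X : Type*) [Group Γ] [MulAction Γ X]
    (k : ℕ) (g : Fin k → Γ) (N : ℕ) (A : Set X)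
    (h : ∀ n : Fin k → ℕ, (∀ i, N ≤ n i) →
      (⋂ i : Fin k, (g i) ^ (n i) • A) = ∅) :
    InW (Γ := Γ) A := by
  apply key_induction k g N A
  intro n hn
  rw [h n hn]
  exact Set.inter_empty A
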